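/- arXiv:2209.04125 — 10 statements merged into one kernel-verified Lean document; each statement's English description precedes it below -/
import Mathlib

section
/- Let X be a T0 topological space. The following are equivalent: (1) X is an algebraic space; (2) X is a directed space and K(X) is a basis of X; (3) X is a directed space and for every x ∈ X there exists a directed subset D ⊆ K(X) with D → x and x = sup D; (4) X is a b-space. -/
open Set

section Defs

variable {X : Type*} [TopologicalSpace X]

/-- Specialization order: `x ⊑ y` iff `x ∈ closure {y}`. -/
def SOrd (x y : X) : Prop := x ∈ closure ({y} : Set X)

/-- `D` is a directed subset (w.r.t. the specialization order). -/
def IsDirSub (D : Set X) : Prop :=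
  D.Nonempty ∧ ∀ a ∈ D, ∀ b ∈ D, ∃ c ∈ D, SOrd a c ∧ SOrd b c

/-- `D` converges to `x`: every open neighbourhood of `x` meets `D`. -/
def ConvTo (D : Set X) (x : X) : Prop :=
  ∀ U : Set X, IsOpen U → x ∈ U → (D ∩ U).Nonempty

/-- `U` is directed-open. -/
def DirOpen (U : Set X) : Prop :=
  ∀ (D : Set X) (x : X), IsDirSub D → ConvTo D x → x ∈ U → (D ∩ U).Nonempty

/-- `x ≪ y` : `x` d-approximates `y`. -/
def WayBelow (x y : X) : Prop :=
  ∀ D : Set X, IsDirSub D → ConvTo D y → ∃ d ∈ D, SOrd x d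

/-- `↓x` w.r.t. the specialization order. -/
def dnSet (x : X) : Set X := {z | SOrd z x}

/-- `↑x` w.r.t. the specialization order. -/
def upSet (x : X) : Set X := {z | SOrd x z}

/-- `⇓y = {x | x ≪ y}`. -/
def wbSet (y : X) : Set X := {x | WayBelow x y}

/-- `x` is the least upper bound of `D` w.r.t. the specialization order. -/
def IsSupOf (x : X) (D : Set X) : Prop :=
  (∀ d ∈ D, SOrd d x) ∧ ∀ y : X, (∀ d ∈ D, SOrd d y) → SOrd x y

/-- A topological ideal: a directed lower set having a supremum and converging to it. -/
def IsTopIdeal (A : Set X) : Prop :=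
  IsDirSub A ∧ (∀ a ∈ A, ∀ z : X, SOrd z a → z ∈ A) ∧
    ∃ s : X, IsSupOf s A ∧ ConvTo A s

end Defs

/-- The set of d-compact elements of `X`. -/
def KSet (X : Type*) [TopologicalSpace X] : Set X := {x | WayBelow x x}

/-- A directed space: a T0 space in which every directed-open set is open. -/
def IsDirectedSpace (X : Type*) [TopologicalSpace X] : Prop :=
  T0Space X ∧ ∀ U : Set X, DirOpen U → IsOpen U

/-- An algebraic space. -/
def IsAlgebraicSpace (X : Type*) [TopologicalSpace X] : Prop :=
  IsDirectedSpace X ∧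
    ∀ x : X, IsDirSub (dnSet x ∩ KSet X) ∧ ConvTo (dnSet x ∩ KSet X) x

/-- A continuous space. -/
def IsContinuousSpace (X : Type*) [TopologicalSpace X] : Prop :=
  IsDirectedSpace X ∧ ∀ x : X, ∃ D ⊆ wbSet x, IsDirSub D ∧ ConvTo D x

/-- A b-space. -/
def IsBSpace (X : Type*) [TopologicalSpace X] : Prop :=
  ∀ U : Set X, IsOpen U → ∀ x ∈ U,
    ∃ y : X, x ∈ interior (upSet y) ∧ interior (upSet y) = upSet y ∧ upSet y ⊆ U

/-- `B` is a basis of the directed space `X`. -/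
def IsBasisOf (X : Type*) [TopologicalSpace X] (B : Set X) : Prop :=
  ∀ x : X, IsDirSub (wbSet x ∩ B) ∧ ConvTo (wbSet x ∩ B) x

/-- The set of topological ideals of `X`. -/
def TopIdeal (X : Type*) [TopologicalSpace X] : Type _ := {A : Set X // IsTopIdeal A}

/-- Membership in the topology `Ω(I_T(X))`. -/
def OmegaOpen {X : Type*} [TopologicalSpace X] (𝒰 : Set (TopIdeal X)) : Prop :=
  ∀ A : TopIdeal X, A ∈ 𝒰 ↔
    ∃ B : TopIdeal X, (∃ x : X, B.1 = dnSet x) ∧ B ∈ 𝒰 ∧ B.1 ⊆ A.1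

theorem sOrd_refl {X : Type*} [TopologicalSpace X] (x : X) : SOrd x x :=
  subset_closure rfl

theorem sOrd_trans {X : Type*} [TopologicalSpace X] {x y z : X}
    (h1 : SOrd x y) (h2 : SOrd y z) : SOrd x z :=
  (closure_minimal (Set.singleton_subset_iff.mpr h2) isClosed_closure) h1

theorem principal_isTopIdeal {X : Type*} [TopologicalSpace X] (x : X) :
    IsTopIdeal (dnSet x) := by
  refine ⟨⟨⟨x, sOrd_refl x⟩, ?_⟩, ?_, x, ⟨?_, ?_⟩, ?_⟩
  · intro a ha b hb
    exact ⟨x, sOrd_refl x, ha, hb⟩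
  · intro a ha z hz
    exact sOrd_trans hz ha
  · intro d hd; exact hd
  · intro y hy; exact hy x (sOrd_refl x)
  · intro U _ hxU
    exact ⟨x, sOrd_refl x, hxU⟩

/-- The topology `Ω(I_T(X))` on the set of topological ideals. -/
def OmegaTop (X : Type*) [TopologicalSpace X] : TopologicalSpace (TopIdeal X) where
  IsOpen := OmegaOpen
  isOpen_univ := by
    intro A
    constructor
    · intro _
      obtain ⟨⟨a, ha⟩, -⟩ := A.2.1
      refine ⟨⟨dnSet a, principal_isTopIdeal a⟩, ⟨a, rfl⟩, trivial, ?_⟩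
      intro z hz
      exact A.2.2.1 a ha z hz
    · intro _
      trivial
  isOpen_inter := by
    intro 𝒰 𝒱 h𝒰 h𝒱 A
    constructor
    · rintro ⟨hAU, hAV⟩
      obtain ⟨B1, ⟨x, hx⟩, hB1U, hB1A⟩ := (h𝒰 A).mp hAU
      obtain ⟨B2, ⟨y, hy⟩, hB2V, hB2A⟩ := (h𝒱 A).mp hAV
      have hxA : x ∈ A.1 := hB1A (by rw [hx]; exact sOrd_refl x)
      have hyA : y ∈ A.1 := hB2A (by rw [hy]; exact sOrd_refl y)
      obtain ⟨c, hcA, hxc, hyc⟩ := A.2.1.2 x hxA y hyA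
      have hsubU : B1.1 ⊆ dnSet c := by
        rw [hx]; intro z hz; exact sOrd_trans hz hxc
      have hsubV : B2.1 ⊆ dnSet c := by
        rw [hy]; intro z hz; exact sOrd_trans hz hyc
      have hcU : (⟨dnSet c, principal_isTopIdeal c⟩ : TopIdeal X) ∈ 𝒰 :=
        (h𝒰 _).mpr ⟨B1, ⟨x, hx⟩, hB1U, hsubU⟩
      have hcV : (⟨dnSet c, principal_isTopIdeal c⟩ : TopIdeal X) ∈ 𝒱 :=
        (h𝒱 _).mpr ⟨B2, ⟨y, hy⟩, hB2V, hsubV⟩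
      exact ⟨⟨dnSet c, principal_isTopIdeal c⟩, ⟨c, rfl⟩, ⟨hcU, hcV⟩,
        fun z hz => A.2.2.1 c hcA z hz⟩
    · rintro ⟨B, hBp, ⟨hBU, hBV⟩, hBA⟩
      exact ⟨(h𝒰 A).mpr ⟨B, hBp, hBU, hBA⟩, (h𝒱 A).mpr ⟨B, hBp, hBV, hBA⟩⟩
  isOpen_sUnion := by
    intro S hS A
    constructor
    · rintro ⟨𝒰, h𝒰S, hA𝒰⟩
      obtain ⟨B, hBp, hB𝒰, hBA⟩ := (hS 𝒰 h𝒰S A).mp hA𝒰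
      exact ⟨B, hBp, ⟨𝒰, h𝒰S, hB𝒰⟩, hBA⟩
    · rintro ⟨B, hBp, ⟨𝒰, h𝒰S, hB𝒰⟩, hBA⟩
      exact ⟨𝒰, h𝒰S, (hS 𝒰 h𝒰S A).mpr ⟨B, hBp, hB𝒰, hBA⟩⟩

instance (X : Type*) [TopologicalSpace X] : TopologicalSpace (TopIdeal X) :=
  OmegaTop X


section Aux

variable {X : Type*} [TopologicalSpace X]

theorem sOrd_mem_open {x y : X} (h : SOrd x y) {U : Set X} (hU : IsOpen U)
    (hx : x ∈ U) : y ∈ U := by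
  obtain ⟨z, hzU, hz⟩ := mem_closure_iff.mp h U hU hx
  rw [Set.mem_singleton_iff] at hz
  rwa [hz] at hzU

theorem convTo_mono {k x : X} {D : Set X} (h : SOrd k x) (hc : ConvTo D x) :
    ConvTo D k := fun U hU hkU => hc U hU (sOrd_mem_open h hU hkU)

theorem singleton_dirSub (y : X) : IsDirSub ({y} : Set X) := by
  refine ⟨⟨y, rfl⟩, ?_⟩
  intro a ha b hb
  rw [Set.mem_singleton_iff] at ha hb
  exact ⟨y, rfl, by rw [ha]; exact sOrd_refl y, by rw [hb]; exact sOrd_refl y⟩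

theorem singleton_convTo {y z : X} (h : SOrd y z) : ConvTo ({z} : Set X) y :=
  fun U hU hyU => ⟨z, rfl, sOrd_mem_open h hU hyU⟩

theorem wayBelow_sOrd {x y : X} (h : WayBelow x y) : SOrd x y := by
  obtain ⟨d, hd, hxd⟩ := h {y} (singleton_dirSub y) (singleton_convTo (sOrd_refl y))
  rw [Set.mem_singleton_iff] at hd
  rwa [hd] at hxd

theorem compact_wayBelow {x y : X} (hx : x ∈ KSet X) (h : SOrd x y) :
    WayBelow x y := fun D hD hc => hx D hD (convTo_mono h hc)

theorem wb_inter_k (x : X) : wbSet x ∩ KSet X = dnSet x ∩ KSet X := by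
  ext k
  constructor
  · rintro ⟨h1, h2⟩; exact ⟨wayBelow_sOrd h1, h2⟩
  · rintro ⟨h1, h2⟩; exact ⟨compact_wayBelow h2 h1, h2⟩

theorem dirOpen_upper {U : Set X} (h : DirOpen U) {y z : X} (hy : y ∈ U)
    (hyz : SOrd y z) : z ∈ U := by
  obtain ⟨d, hd, hdU⟩ := h {z} y (singleton_dirSub z) (singleton_convTo hyz) hy
  rw [Set.mem_singleton_iff] at hd
  rwa [hd] at hdU

theorem upSet_dirOpen_of_compact {x : X} (hx : x ∈ KSet X) :
    DirOpen (upSet x) := by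
  intro D z hD hc hz
  exact hx D hD (convTo_mono hz hc)

theorem compact_of_upSet_open {a : X} (h : IsOpen (upSet a)) : a ∈ KSet X :=
  fun D hD hc => hc (upSet a) h (sOrd_refl a)

theorem bspace_directed [T0Space X] (hB : IsBSpace X) : IsDirectedSpace X := by
  refine ⟨inferInstance, ?_⟩
  intro U hU
  rw [isOpen_iff_forall_mem_open]
  intro x hx
  set D : Set X := {y : X | x ∈ interior (upSet y) ∧ interior (upSet y) = upSet y}
    with hDdef
  have hmemD : ∀ y ∈ D, x ∈ upSet y := by
    rintro y ⟨h1, h2⟩; rwa [h2] at h1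
  have hD : IsDirSub D := by
    constructor
    · obtain ⟨y, h1, h2, _⟩ := hB Set.univ isOpen_univ x (Set.mem_univ x)
      exact ⟨y, h1, h2⟩
    · rintro a ⟨ha1, ha2⟩ b ⟨hb1, hb2⟩
      have hoa : IsOpen (upSet a) := ha2 ▸ isOpen_interior
      have hob : IsOpen (upSet b) := hb2 ▸ isOpen_interior
      obtain ⟨y, h1, h2, h3⟩ := hB (upSet a ∩ upSet b) (hoa.inter hob) x
        ⟨hmemD a ⟨ha1, ha2⟩, hmemD b ⟨hb1, hb2⟩⟩
      have hyy := h3 (sOrd_refl y)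
      exact ⟨y, ⟨h1, h2⟩, hyy.1, hyy.2⟩
  have hconv : ConvTo D x := by
    intro V hV hxV
    obtain ⟨y, h1, h2, h3⟩ := hB V hV x hxV
    exact ⟨y, ⟨h1, h2⟩, h3 (sOrd_refl y)⟩
  obtain ⟨y, hyD, hyU⟩ := hU D x hD hconv hx
  refine ⟨upSet y, ?_, hyD.2 ▸ isOpen_interior, hmemD y hyD⟩
  intro z hz
  exact dirOpen_upper hU hyU hz

end Aux

/-- characterizations of algebraic spaces. -/
theorem algebraic_space_tfae (X : Type*) [TopologicalSpace X] [T0Space X] :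
    [IsAlgebraicSpace X,
     IsDirectedSpace X ∧ IsBasisOf X (KSet X),
     IsDirectedSpace X ∧
       ∀ x : X, ∃ D ⊆ KSet X, IsDirSub D ∧ ConvTo D x ∧ IsSupOf x D,
     IsBSpace X].TFAE := by
  tfae_have 1 → 2 := by
    rintro ⟨hdir, h⟩
    refine ⟨hdir, fun x => ?_⟩
    rw [wb_inter_k]
    exact h x
  tfae_have 2 → 1 := by
    rintro ⟨hdir, h⟩
    refine ⟨hdir, fun x => ?_⟩
    rw [← wb_inter_k]
    exact h x
  tfae_have 1 → 3 := by
    rintro ⟨hdir, h⟩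
    refine ⟨hdir, fun x => ?_⟩
    obtain ⟨hd, hc⟩ := h x
    refine ⟨dnSet x ∩ KSet X, Set.inter_subset_right, hd, hc, ?_, ?_⟩
    · rintro d ⟨h1, _⟩; exact h1
    · intro y hy
      rw [SOrd, mem_closure_iff]
      intro U hU hxU
      obtain ⟨d, hdD, hdU⟩ := hc U hU hxU
      exact ⟨y, sOrd_mem_open (hy d hdD) hU hdU, rfl⟩
  tfae_have 3 → 4 := by
    rintro ⟨hdir, h⟩
    intro U hU x hxU
    obtain ⟨D, hDK, hDd, hDc, hDs⟩ := h x
    obtain ⟨d, hdD, hdU⟩ := hDc U hU hxU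
    have hopen : IsOpen (upSet d) :=
      hdir.2 _ (upSet_dirOpen_of_compact (hDK hdD))
    refine ⟨d, ?_, hopen.interior_eq, fun z hz => sOrd_mem_open hz hU hdU⟩
    rw [hopen.interior_eq]
    exact hDs.1 d hdD
  tfae_have 4 → 1 := by
    intro hB
    have hdir := bspace_directed hB
    refine ⟨hdir, fun x => ?_⟩
    have hconv : ConvTo (dnSet x ∩ KSet X) x := by
      intro U hU hxU
      obtain ⟨y, h1, h2, h3⟩ := hB U hU x hxU
      have hyK : y ∈ KSet X := compact_of_upSet_open (h2 ▸ isOpen_interior)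
      have hyx : SOrd y x := by rw [h2] at h1; exact h1
      exact ⟨y, ⟨hyx, hyK⟩, h3 (sOrd_refl y)⟩
    refine ⟨⟨?_, ?_⟩, hconv⟩
    · obtain ⟨y, hy, _⟩ := hconv Set.univ isOpen_univ (Set.mem_univ x)
      exact ⟨y, hy⟩
    · rintro a ⟨hax, haK⟩ b ⟨hbx, hbK⟩
      have hoa : IsOpen (upSet a) := hdir.2 _ (upSet_dirOpen_of_compact haK)
      have hob : IsOpen (upSet b) := hdir.2 _ (upSet_dirOpen_of_compact hbK)
      obtain ⟨y, h1, h2, h3⟩ := hB (upSet a ∩ upSet b) (hoa.inter hob) x ⟨hax, hbx⟩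
      have hyK : y ∈ KSet X := compact_of_upSet_open (h2 ▸ isOpen_interior)
      have hyx : SOrd y x := by rw [h2] at h1; exact h1
      have hyy := h3 (sOrd_refl y)
      exact ⟨y, ⟨hyx, hyK⟩, hyy.1, hyy.2⟩
  tfae_finish
end

section
/- Let X be an algebraic space. Then K(X) is a basis of X, and for every basis B of X one has K(X) ⊆ B (i.e., K(X) is the least basis of X). -/
open Set

theorem sOrd_antisymm {X : Type*} [TopologicalSpace X] [T0Space X] {x y : X}
    (h1 : SOrd x y) (h2 : SOrd y x) : x = y := by
  have hx : y ⤳ x := specializes_iff_mem_closure.mpr h1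
  have hy : x ⤳ y := specializes_iff_mem_closure.mpr h2
  exact (hy.antisymm hx).eq

theorem compact_below_wayBelow {X : Type*} [TopologicalSpace X] {k x : X}
    (hk : WayBelow k k) (hkx : SOrd k x) : WayBelow k x := by
  intro D hD hDx
  apply hk D hD
  intro U hU hkU
  have hxU : x ∈ U := by
    by_contra hx
    have hsub : closure ({x} : Set X) ⊆ Uᶜ :=
      closure_minimal (Set.singleton_subset_iff.mpr hx) hU.isClosed_compl
    exact hsub hkx hkU
  exact hDx U hU hxU

/-- `K(X)` is the least basis of an algebraic space `X`. -/
theorem kset_least_basis {X : Type*} [TopologicalSpace X] [T0Space X]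
    (hX : IsAlgebraicSpace X) :
    IsBasisOf X (KSet X) ∧ ∀ B : Set X, IsBasisOf X B → KSet X ⊆ B := by
  have key : ∀ x : X, wbSet x ∩ KSet X = dnSet x ∩ KSet X := by
    intro x
    ext k
    constructor
    · rintro ⟨hkx, hkK⟩
      refine ⟨?_, hkK⟩
      obtain ⟨hdir, hconv⟩ := hX.2 x
      obtain ⟨d, ⟨hdx, _⟩, hkd⟩ := hkx _ hdir hconv
      exact sOrd_trans hkd hdx
    · rintro ⟨hkx, hkK⟩
      exact ⟨compact_below_wayBelow hkK hkx, hkK⟩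
  constructor
  · intro x
    rw [key x]
    exact hX.2 x
  · intro B hB k hk
    obtain ⟨hdir, hconv⟩ := hB k
    obtain ⟨d, ⟨hdk, hdB⟩, hkd⟩ := hk _ hdir hconv
    have hsing : IsDirSub ({k} : Set X) :=
      ⟨⟨k, rfl⟩, fun a ha b hb => ⟨k, rfl, by rw [ha]; exact sOrd_refl k,
        by rw [hb]; exact sOrd_refl k⟩⟩
    have hsconv : ConvTo ({k} : Set X) k := fun U _ hkU => ⟨k, rfl, hkU⟩
    obtain ⟨e, he, hde⟩ := hdk _ hsing hsconv
    rw [he] at hde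
    rw [sOrd_antisymm hkd hde]
    exact hdB
end

section
/- Let X be an algebraic space. Then for every x ∈ K(X), the set ↑x is open (i.e., ↑x = int(↑x)); moreover, the family {↑x : x ∈ K(X)} is a base for the topology of X. -/
open Set

/-- in an algebraic space, `↑x` is open for compact `x`, and these sets
form a base of the topology. -/
theorem algebraic_space_base {X : Type*} [TopologicalSpace X] [T0Space X]
    (hX : IsAlgebraicSpace X) :
    (∀ x ∈ KSet X, IsOpen (upSet x)) ∧
      TopologicalSpace.IsTopologicalBasis (upSet '' KSet X) := by
  have hmem : ∀ {a b : X} {U : Set X}, SOrd a b → IsOpen U → a ∈ U → b ∈ U := by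
    intro a b U hab hU haU
    obtain ⟨c, hc1, hc2⟩ := mem_closure_iff.mp hab U hU haU
    rwa [hc2] at hc1
  have hopen : ∀ x ∈ KSet X, IsOpen (upSet x) := by
    intro x hx
    apply hX.1.2
    intro D y hD hDy hyU
    have hDx : ConvTo D x := fun U hU hxU => hDy U hU (hmem hyU hU hxU)
    obtain ⟨d, hdD, hxd⟩ := hx D hD hDx
    exact ⟨d, hdD, hxd⟩
  refine ⟨hopen, TopologicalSpace.isTopologicalBasis_of_isOpen_of_nhds ?_ ?_⟩
  · rintro _ ⟨x, hx, rfl⟩; exact hopen x hx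
  · intro x U hxU hU
    obtain ⟨k, hkx, hkU⟩ := (hX.2 x).2 U hU hxU
    refine ⟨upSet k, ⟨k, hkx.2, rfl⟩, hkx.1, ?_⟩
    intro z hz
    exact hmem hz hU hkU
end

section
/- Let X and Y be directed spaces, let D be a directed subset of X × Y (with the componentwise specialization order), and let (x, y) ∈ X × Y. Then D converges to (x, y) in X ⊗ Y (i.e., every directed-open subset of the topological product X × Y containing (x, y) meets D) if and only if the projection π₁(D) converges to x in X and the projection π₂(D) converges to y in Y. -/
open Set

theorem sOrd_prod {X Y : Type*} [TopologicalSpace X] [TopologicalSpace Y]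
    {p q : X × Y} : SOrd p q ↔ SOrd p.1 q.1 ∧ SOrd p.2 q.2 := by
  unfold SOrd
  rw [show ({q} : Set (X × Y)) = {q.1} ×ˢ {q.2} by
        rw [Set.singleton_prod_singleton],
      closure_prod_eq]
  exact Set.mem_prod

theorem isOpen_dirOpen {X : Type*} [TopologicalSpace X] {U : Set X}
    (hU : IsOpen U) : DirOpen U :=
  fun _ _ _ hc hx => hc U hU hx

theorem dirOpen_upper_s4 {X : Type*} [TopologicalSpace X] {U : Set X}
    (hU : DirOpen U) {p q : X} (h : SOrd p q) (hp : p ∈ U) : q ∈ U := by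
  have hdir : IsDirSub ({q} : Set X) := by
    refine ⟨⟨q, rfl⟩, ?_⟩
    intro a ha b hb
    exact ⟨q, rfl, by rw [Set.mem_singleton_iff] at ha; rw [ha]; exact sOrd_refl q,
      by rw [Set.mem_singleton_iff] at hb; rw [hb]; exact sOrd_refl q⟩
  have hconv : ConvTo ({q} : Set X) p := by
    intro W hW hpW
    rcases (mem_closure_iff.mp h) W hW hpW with ⟨z, hzW, hz⟩
    exact ⟨z, hz, hzW⟩
  rcases hU {q} p hdir hconv hp with ⟨z, hz, hzU⟩
  cases hz
  exact hzU

/-- A "horizontal slice" set is directed-open if paired with a converging column. -/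
theorem slice_convTo {X Y : Type*} [TopologicalSpace X] [TopologicalSpace Y]
    {E : Set X} {a : X} (hE : ConvTo E a) (b : Y) :
    ConvTo (E ×ˢ ({b} : Set Y)) (a, b) := by
  intro W hW habW
  rcases isOpen_prod_iff.mp hW a b habW with ⟨S, T, hS, hT, haS, hbT, hST⟩
  rcases hE S hS haS with ⟨e, heE, heS⟩
  exact ⟨(e, b), ⟨heE, rfl⟩, hST ⟨heS, hbT⟩⟩

theorem slice_dir {X Y : Type*} [TopologicalSpace X] [TopologicalSpace Y]
    {E : Set X} (hE : IsDirSub E) (b : Y) :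
    IsDirSub (E ×ˢ ({b} : Set Y)) := by
  obtain ⟨⟨e0, he0⟩, hdir⟩ := hE
  refine ⟨⟨(e0, b), he0, rfl⟩, ?_⟩
  rintro ⟨p1, p2⟩ ⟨hp, hp2⟩ ⟨q1, q2⟩ ⟨hq, hq2⟩
  rcases hdir p1 hp q1 hq with ⟨c, hc, hpc, hqc⟩
  refine ⟨(c, b), ⟨hc, rfl⟩, sOrd_prod.mpr ⟨hpc, ?_⟩,
    sOrd_prod.mpr ⟨hqc, ?_⟩⟩
  · rw [show p2 = b from hp2]; exact sOrd_refl b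
  · rw [show q2 = b from hq2]; exact sOrd_refl b

theorem col_convTo {X Y : Type*} [TopologicalSpace X] [TopologicalSpace Y]
    {F : Set Y} {b : Y} (hF : ConvTo F b) (a : X) :
    ConvTo (({a} : Set X) ×ˢ F) (a, b) := by
  intro W hW habW
  rcases isOpen_prod_iff.mp hW a b habW with ⟨S, T, hS, hT, haS, hbT, hST⟩
  rcases hF T hT hbT with ⟨f, hfF, hfT⟩
  exact ⟨(a, f), ⟨rfl, hfF⟩, hST ⟨haS, hfT⟩⟩

theorem col_dir {X Y : Type*} [TopologicalSpace X] [TopologicalSpace Y]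
    {F : Set Y} (hF : IsDirSub F) (a : X) :
    IsDirSub (({a} : Set X) ×ˢ F) := by
  obtain ⟨⟨f0, hf0⟩, hdir⟩ := hF
  refine ⟨⟨(a, f0), rfl, hf0⟩, ?_⟩
  rintro ⟨p1, p2⟩ ⟨hp1, hp⟩ ⟨q1, q2⟩ ⟨hq1, hq⟩
  rcases hdir p2 hp q2 hq with ⟨c, hc, hpc, hqc⟩
  refine ⟨(a, c), ⟨rfl, hc⟩, sOrd_prod.mpr ⟨?_, hpc⟩,
    sOrd_prod.mpr ⟨?_, hqc⟩⟩
  · rw [show p1 = a from hp1]; exact sOrd_refl a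
  · rw [show q1 = a from hq1]; exact sOrd_refl a

/-- convergence in `X ⊗ Y` is componentwise convergence. -/
theorem tensor_convergence {X Y : Type*} [TopologicalSpace X] [TopologicalSpace Y]
    (hX : IsDirectedSpace X) (hY : IsDirectedSpace Y)
    (D : Set (X × Y)) (x : X) (y : Y)
    (hD : D.Nonempty ∧ ∀ p ∈ D, ∀ q ∈ D, ∃ r ∈ D,
      (SOrd p.1 r.1 ∧ SOrd p.2 r.2) ∧ (SOrd q.1 r.1 ∧ SOrd q.2 r.2)) :
    (∀ U : Set (X × Y), DirOpen U → (x, y) ∈ U → (D ∩ U).Nonempty) ↔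
      ConvTo (Prod.fst '' D) x ∧ ConvTo (Prod.snd '' D) y := by
  constructor
  · intro h
    constructor
    · intro U hU hxU
      rcases h (U ×ˢ (univ : Set Y)) (isOpen_dirOpen (hU.prod isOpen_univ))
        ⟨hxU, trivial⟩ with ⟨p, hpD, hp1, -⟩
      exact ⟨p.1, ⟨p, hpD, rfl⟩, hp1⟩
    · intro U hU hyU
      rcases h ((univ : Set X) ×ˢ U) (isOpen_dirOpen (isOpen_univ.prod hU))
        ⟨trivial, hyU⟩ with ⟨p, hpD, -, hp2⟩
      exact ⟨p.2, ⟨p, hpD, rfl⟩, hp2⟩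
  · rintro ⟨h1, h2⟩ U hU hxyU
    -- the slice {b | (x, b) ∈ U} is directed-open in Y, hence open
    have hUx : DirOpen {b : Y | (x, b) ∈ U} := by
      intro F b' hF hconv hb'
      rcases hU (({x} : Set X) ×ˢ F) (x, b') (col_dir hF x)
        (col_convTo hconv x) hb' with ⟨⟨p1, p2⟩, ⟨hp1, hp2⟩, hpU⟩
      refine ⟨p2, hp2, ?_⟩
      rw [← show p1 = x from hp1]; exact hpU
    -- so y has a witness b ∈ π₂ D with (x, b) ∈ U
    rcases h2 _ (hY.2 _ hUx) hxyU with ⟨b, hbD2, hbU⟩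
    -- the set V of a admitting some b ∈ π₂D with (a,b) ∈ U is directed-open in X
    have hV : DirOpen {a : X | ∃ b ∈ Prod.snd '' D, (a, b) ∈ U} := by
      intro E a' hE hconv ha'
      rcases ha' with ⟨b0, hb0D, hb0U⟩
      rcases hU (E ×ˢ ({b0} : Set Y)) (a', b0) (slice_dir hE b0)
        (slice_convTo hconv b0) hb0U with ⟨⟨p1, p2⟩, ⟨hp1, hp2⟩, hpU⟩
      refine ⟨p1, hp1, b0, hb0D, ?_⟩
      rw [← show p2 = b0 from hp2]; exact hpU
    have hxV : x ∈ {a : X | ∃ b ∈ Prod.snd '' D, (a, b) ∈ U} := ⟨b, hbD2, hbU⟩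
    rcases h1 _ (hX.2 _ hV) hxV with ⟨a, haD1, b', hb'D2, hab'U⟩
    rcases haD1 with ⟨p, hpD, rfl⟩
    rcases hb'D2 with ⟨q, hqD, rfl⟩
    rcases hD.2 p hpD q hqD with ⟨r, hrD, ⟨hp1, -⟩, ⟨-, hq2⟩⟩
    refine ⟨r, hrD, dirOpen_upper_s4 hU (p := (p.1, q.2)) ?_ hab'U⟩
    exact sOrd_prod.mpr ⟨hp1, hq2⟩
end

section
/- Let X₁, X₂ and Y be directed spaces and let f : X₁ × X₂ → Y be a map such that for every fixed x₂ ∈ X₂ the map x ↦ f(x, x₂) : X₁ → Y is continuous and for every fixed x₁ ∈ X₁ the map y ↦ f(x₁, y) : X₂ → Y is continuous. Then f : X₁ ⊗ X₂ → Y is continuous. -/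
open Set

theorem sOrd_map {X Y : Type*} [TopologicalSpace X] [TopologicalSpace Y]
    {g : X → Y} (hg : Continuous g) {a b : X} (h : SOrd a b) : SOrd (g a) (g b) := by
  have h1 : closure ({b} : Set X) ⊆ closure (g ⁻¹' {g b}) :=
    closure_mono (by intro z hz; rw [Set.mem_singleton_iff.mp hz]; exact rfl)
  exact hg.closure_preimage_subset _ (h1 h)

theorem sOrd_open_upper {X : Type*} [TopologicalSpace X] {U : Set X} (hU : IsOpen U)
    {a b : X} (ha : a ∈ U) (h : SOrd a b) : b ∈ U := by
  rcases (mem_closure_iff.mp h) U hU ha with ⟨z, hzU, hz⟩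
  rwa [← hz]

/-- a separately continuous map on a product of two directed spaces is
continuous from `X₁ ⊗ X₂` (whose opens are the directed-open sets of the topological
product) to `Y`. -/
theorem separately_continuous_is_tensor_continuous {X₁ X₂ Y : Type*}
    [TopologicalSpace X₁] [TopologicalSpace X₂] [TopologicalSpace Y]
    (h1 : IsDirectedSpace X₁) (h2 : IsDirectedSpace X₂) (hY : IsDirectedSpace Y)
    (f : X₁ × X₂ → Y)
    (hfst : ∀ x₂ : X₂, Continuous fun x : X₁ => f (x, x₂))
    (hsnd : ∀ x₁ : X₁, Continuous fun y : X₂ => f (x₁, y)) :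
    ∀ V : Set Y, IsOpen V → DirOpen (f ⁻¹' V) := by
  intro V hV D x hD hconv hxV
  -- find d ∈ D with f (d.1, x.2) ∈ V
  have hU1 : IsOpen ((fun a : X₁ => f (a, x.2)) ⁻¹' V) := (hfst x.2).isOpen_preimage V hV
  obtain ⟨d, hdD, hd⟩ := hconv (((fun a : X₁ => f (a, x.2)) ⁻¹' V) ×ˢ (univ : Set X₂))
    (hU1.prod isOpen_univ) (by simpa using hxV)
  have hdV : f (d.1, x.2) ∈ V := hd.1
  -- find e ∈ D with f (d.1, e.2) ∈ V
  have hU2 : IsOpen ((fun b : X₂ => f (d.1, b)) ⁻¹' V) := (hsnd d.1).isOpen_preimage V hV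
  obtain ⟨e, heD, he⟩ := hconv ((univ : Set X₁) ×ˢ ((fun b : X₂ => f (d.1, b)) ⁻¹' V))
    (isOpen_univ.prod hU2) (by simpa using hdV)
  have heV : f (d.1, e.2) ∈ V := he.2
  -- upper bound of d and e in D
  obtain ⟨c, hcD, hdc, hec⟩ := hD.2 d hdD e heD
  have hdc1 : SOrd d.1 c.1 := sOrd_map continuous_fst hdc
  have hec2 : SOrd e.2 c.2 := sOrd_map continuous_snd hec
  have h1 : SOrd (f (d.1, e.2)) (f (c.1, e.2)) :=
    sOrd_map (g := fun a : X₁ => f (a, e.2)) (hfst e.2) hdc1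
  have h2 : SOrd (f (c.1, e.2)) (f (c.1, c.2)) :=
    sOrd_map (g := fun b : X₂ => f (c.1, b)) (hsnd c.1) hec2
  refine ⟨c, hcD, ?_⟩
  have : f (c.1, c.2) ∈ V := sOrd_open_upper hV heV (sOrd_trans h1 h2)
  simpa using this
end

section
/- Let X be a T0 space. Then Ω(I_T(X)) is a topology on I_T(X), and the topological space (I_T(X), Ω(I_T(X))) is an algebraic space such that: (1) its specialization order equals set-theoretic inclusion of topological ideals; (2) its set of d-compact elements is K(I_T(X)) = {↓x : x ∈ X}. -/
open Set

section Proof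

variable {X : Type*} [TopologicalSpace X]

/-- The principal ideal as a `TopIdeal`. -/
def pIdeal (x : X) : TopIdeal X := ⟨dnSet x, principal_isTopIdeal x⟩

theorem isOpen_iff_omegaOpen {𝒰 : Set (TopIdeal X)} : IsOpen 𝒰 ↔ OmegaOpen 𝒰 := Iff.rfl

theorem Ux_open (x : X) : IsOpen {C : TopIdeal X | x ∈ C.1} := by
  intro A
  constructor
  · intro hx
    exact ⟨pIdeal x, ⟨x, rfl⟩, sOrd_refl x, fun z hz => A.2.2.1 x hx z hz⟩
  · rintro ⟨B, ⟨y, hy⟩, hBU, hBA⟩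
    exact hBA hBU

theorem subset_of_sOrd' {A B : TopIdeal X} (h : SOrd A B) : A.1 ⊆ B.1 := by
  intro x hx
  obtain ⟨C, hC1, hC2⟩ := mem_closure_iff.mp h _ (Ux_open x) hx
  rw [Set.mem_singleton_iff] at hC2
  subst hC2
  exact hC1

theorem sOrd_of_subset' {A B : TopIdeal X} (h : A.1 ⊆ B.1) : SOrd A B := by
  rw [SOrd, mem_closure_iff]
  intro 𝒰 h𝒰 hA
  obtain ⟨C, hCp, hC𝒰, hCA⟩ := (h𝒰 A).mp hA
  exact ⟨B, (h𝒰 B).mpr ⟨C, hCp, hC𝒰, hCA.trans h⟩, rfl⟩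

/-- The directed family of principal subideals of `A`. -/
def pD (A : TopIdeal X) : Set (TopIdeal X) := {B | ∃ x ∈ A.1, B = pIdeal x}

theorem pD_dir (A : TopIdeal X) : IsDirSub (pD A) := by
  obtain ⟨⟨a, ha⟩, hdir⟩ := A.2.1
  refine ⟨⟨pIdeal a, a, ha, rfl⟩, ?_⟩
  rintro B1 ⟨x, hx, rfl⟩ B2 ⟨y, hy, rfl⟩
  obtain ⟨c, hc, hxc, hyc⟩ := hdir x hx y hy
  exact ⟨pIdeal c, ⟨c, hc, rfl⟩,
    sOrd_of_subset' (fun z hz => sOrd_trans hz hxc),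
    sOrd_of_subset' (fun z hz => sOrd_trans hz hyc)⟩

theorem pD_conv (A : TopIdeal X) : ConvTo (pD A) A := by
  intro 𝒰 h𝒰 hA
  obtain ⟨B, ⟨y, hy⟩, hB𝒰, hBA⟩ := (h𝒰 A).mp hA
  have hyA : y ∈ A.1 := hBA (by rw [hy]; exact sOrd_refl y)
  have hBp : B = pIdeal y := Subtype.ext hy
  exact ⟨B, ⟨y, hyA, hBp⟩, hB𝒰⟩

theorem pIdeal_compact (x : X) : WayBelow (pIdeal x) (pIdeal x) := by
  intro D hD hconv
  obtain ⟨d, hdD, hdx⟩ := hconv _ (Ux_open x) (sOrd_refl x)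
  exact ⟨d, hdD, sOrd_of_subset' (fun z hz => d.2.2.1 x hdx z hz)⟩

theorem kSet_eq : KSet (TopIdeal X) = {A : TopIdeal X | ∃ x : X, A.1 = dnSet x} := by
  ext A
  constructor
  · intro hA
    obtain ⟨d, ⟨x, hxA, rfl⟩, hAd⟩ := hA (pD A) (pD_dir A) (pD_conv A)
    refine ⟨x, subset_antisymm (subset_of_sOrd' hAd) (fun z hz => A.2.2.1 x hxA z hz)⟩
  · rintro ⟨x, hx⟩
    have : A = pIdeal x := Subtype.ext hx
    rw [this]
    exact pIdeal_compact x

theorem dn_inter_k (A : TopIdeal X) : dnSet A ∩ KSet (TopIdeal X) = pD A := by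
  ext B
  constructor
  · rintro ⟨hBA, hBK⟩
    rw [kSet_eq] at hBK
    obtain ⟨x, hx⟩ := hBK
    have hxB : x ∈ B.1 := by rw [hx]; exact sOrd_refl x
    exact ⟨x, subset_of_sOrd' hBA hxB, Subtype.ext hx⟩
  · rintro ⟨x, hxA, rfl⟩
    refine ⟨sOrd_of_subset' (fun z hz => A.2.2.1 x hxA z hz), ?_⟩
    rw [kSet_eq]
    exact ⟨x, rfl⟩

theorem topIdeal_t0 [T0Space X] : T0Space (TopIdeal X) := by
  refine t0Space_iff_inseparable _ |>.mpr ?_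
  intro A B h
  refine Subtype.ext (subset_antisymm ?_ ?_)
  · exact subset_of_sOrd' (specializes_iff_mem_closure.mp h.specializes')
  · exact subset_of_sOrd' (specializes_iff_mem_closure.mp h.specializes)

theorem dirOpen_isOpen {𝒰 : Set (TopIdeal X)} (h : DirOpen 𝒰) : IsOpen 𝒰 := by
  intro A
  constructor
  · intro hA
    obtain ⟨d, ⟨x, hxA, rfl⟩, hd𝒰⟩ := h (pD A) A (pD_dir A) (pD_conv A) hA
    exact ⟨pIdeal x, ⟨x, rfl⟩, hd𝒰, fun z hz => A.2.2.1 x hxA z hz⟩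
  · rintro ⟨B, hBp, hB𝒰, hBA⟩
    have hBA' : SOrd B A := sOrd_of_subset' hBA
    have hdir : IsDirSub ({A} : Set (TopIdeal X)) := by
      refine ⟨⟨A, rfl⟩, ?_⟩
      intro a ha b hb
      rw [Set.mem_singleton_iff] at ha hb
      exact ⟨A, rfl, by rw [ha]; exact sOrd_refl A, by rw [hb]; exact sOrd_refl A⟩
    have hconv : ConvTo ({A} : Set (TopIdeal X)) B := by
      intro U hU hBU
      obtain ⟨C, hC1, hC2⟩ := mem_closure_iff.mp hBA' U hU hBU
      rw [Set.mem_singleton_iff] at hC2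
      exact ⟨C, by rw [hC2]; exact rfl, hC1⟩
    obtain ⟨d, hd1, hd2⟩ := h {A} B hdir hconv hB𝒰
    rw [Set.mem_singleton_iff] at hd1
    rwa [hd1] at hd2

end Proof

/-- `(I_T(X), Ω(I_T(X)))` is an algebraic space whose specialization order
is set inclusion and whose d-compact elements are the principal ideals. (That
`Ω(I_T(X))` is a topology is witnessed by the definition `OmegaTop` above, whose open
sets are exactly the members of `Ω(I_T(X))`.) -/
theorem topIdeal_space_algebraic (X : Type*) [TopologicalSpace X] [T0Space X] :
    IsAlgebraicSpace (TopIdeal X) ∧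
      (∀ A B : TopIdeal X, SOrd A B ↔ A.1 ⊆ B.1) ∧
      KSet (TopIdeal X) = {A : TopIdeal X | ∃ x : X, A.1 = dnSet x} := by
  refine ⟨⟨⟨topIdeal_t0, fun U hU => dirOpen_isOpen hU⟩, ?_⟩,
    fun A B => ⟨subset_of_sOrd', sOrd_of_subset'⟩, kSet_eq⟩
  intro A
  rw [dn_inter_k]
  exact ⟨pD_dir A, pD_conv A⟩
end

section
/- Let P be a dcpo (directed-complete partial order) equipped with its Scott topology. Then the topological ideals of P are exactly the ideals of P (the nonempty directed lower sets), i.e., I_T(P) = Id(P); moreover, the topology Ω(I_T(P)) coincides with the Scott topology on I_T(P) ordered by set inclusion. -/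
open Set

/-- Scott open sets of a preorder. -/
def ScottOpenOrd {α : Type*} [Preorder α] (U : Set α) : Prop :=
  (∀ a b : α, a ∈ U → a ≤ b → b ∈ U) ∧
    ∀ D : Set α, D.Nonempty → DirectedOn (· ≤ ·) D →
      ∀ a : α, IsLUB D a → a ∈ U → (D ∩ U).Nonempty

/-- Topological ideals are ordered by set inclusion. -/
instance {X : Type*} [TopologicalSpace X] : PartialOrder (TopIdeal X) where
  le A B := A.1 ⊆ B.1
  le_refl A := subset_rfl
  le_trans A B C h1 h2 := Set.Subset.trans h1 h2
  le_antisymm A B h1 h2 := Subtype.ext (Set.Subset.antisymm h1 h2)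

section Aux

variable {P : Type*} [PartialOrder P] [TopologicalSpace P]
variable (hscott : ∀ U : Set P, IsOpen U ↔ ScottOpenOrd U)
include hscott

theorem sOrd_iff_le (x y : P) : SOrd x y ↔ x ≤ y := by
  constructor
  · intro h
    by_contra hxy
    have hU : IsOpen {z : P | ¬ z ≤ y} := by
      rw [hscott]
      constructor
      · intro a b ha hab hb
        exact ha (hab.trans hb)
      · intro D hne hdir a hlub ha
        by_contra hc
        push_neg at hc
        apply ha
        apply hlub.2
        intro d hd
        by_contra hdy
        exact (hc.subset ⟨hd, hdy⟩).elim
    have := mem_closure_iff.mp h _ hU hxy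
    obtain ⟨z, hz, hz'⟩ := this
    rw [Set.mem_singleton_iff] at hz'
    subst hz'
    exact hz le_rfl
  · intro h
    rw [SOrd, mem_closure_iff]
    intro U hU hxU
    exact ⟨y, ((hscott U).mp hU).1 x y hxU h, rfl⟩

theorem topIdeal_iff
    (hdcpo : ∀ D : Set P, D.Nonempty → DirectedOn (· ≤ ·) D → ∃ a : P, IsLUB D a)
    (A : Set P) :
    IsTopIdeal A ↔ A.Nonempty ∧ DirectedOn (· ≤ ·) A ∧ IsLowerSet A := by
  constructor
  · rintro ⟨⟨hne, hdir⟩, hlow, _⟩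
    refine ⟨hne, ?_, ?_⟩
    · intro a ha b hb
      obtain ⟨c, hc, h1, h2⟩ := hdir a ha b hb
      exact ⟨c, hc, (sOrd_iff_le hscott _ _).mp h1, (sOrd_iff_le hscott _ _).mp h2⟩
    · intro a b hba ha
      exact hlow a ha b ((sOrd_iff_le hscott _ _).mpr hba)
  · rintro ⟨hne, hdir, hlow⟩
    obtain ⟨s, hs⟩ := hdcpo A hne hdir
    refine ⟨⟨hne, ?_⟩, ?_, s, ⟨?_, ?_⟩, ?_⟩
    · intro a ha b hb
      obtain ⟨c, hc, h1, h2⟩ := hdir a ha b hb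
      exact ⟨c, hc, (sOrd_iff_le hscott _ _).mpr h1, (sOrd_iff_le hscott _ _).mpr h2⟩
    · intro a ha z hz
      exact hlow ((sOrd_iff_le hscott _ _).mp hz) ha
    · intro d hd
      exact (sOrd_iff_le hscott _ _).mpr (hs.1 hd)
    · intro y hy
      exact (sOrd_iff_le hscott _ _).mpr
        (hs.2 fun d hd => (sOrd_iff_le hscott _ _).mp (hy d hd))
    · intro U hU hsU
      exact ((hscott U).mp hU).2 A hne hdir s hs hsU

end Aux

/-- for a dcpo `P` with the Scott topology, the topological ideals are
exactly the (order-theoretic) ideals, and `Ω(I_T(P))` is the Scott topology of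
`(I_T(P), ⊆)`. -/
theorem topIdeal_of_dcpo_scott {P : Type*} [PartialOrder P] [TopologicalSpace P]
    (hscott : ∀ U : Set P, IsOpen U ↔ ScottOpenOrd U)
    (hdcpo : ∀ D : Set P, D.Nonempty → DirectedOn (· ≤ ·) D → ∃ a : P, IsLUB D a) :
    {A : Set P | IsTopIdeal A} =
        {A : Set P | A.Nonempty ∧ DirectedOn (· ≤ ·) A ∧ IsLowerSet A} ∧
      ∀ 𝒰 : Set (TopIdeal P), IsOpen 𝒰 ↔ ScottOpenOrd 𝒰 := by
  constructor
  · ext A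
    exact topIdeal_iff hscott hdcpo A
  · intro 𝒰
    show OmegaOpen 𝒰 ↔ ScottOpenOrd 𝒰
    constructor
    · intro h
      constructor
      · intro A B hA hAB
        obtain ⟨B', hp, hB'𝒰, hsub⟩ := (h A).mp hA
        exact (h B).mpr ⟨B', hp, hB'𝒰, hsub.trans hAB⟩
      · intro D hne hdir A hlub hA
        obtain ⟨B, ⟨x, hx⟩, hB𝒰, hsub⟩ := (h A).mp hA
        have hxA : x ∈ A.1 := hsub (by rw [hx]; exact sOrd_refl x)
        -- the union of D is a topological ideal
        have hUU : IsTopIdeal (⋃ I ∈ D, (I : TopIdeal P).1) := by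
          rw [topIdeal_iff hscott hdcpo]
          refine ⟨?_, ?_, ?_⟩
          · obtain ⟨I, hI⟩ := hne
            obtain ⟨a, ha⟩ := I.2.1.1
            exact ⟨a, Set.mem_biUnion hI ha⟩
          · intro a ha b hb
            simp only [Set.mem_iUnion] at ha hb
            obtain ⟨I, hI, haI⟩ := ha
            obtain ⟨J, hJ, hbJ⟩ := hb
            obtain ⟨K, hK, hIK, hJK⟩ := hdir I hI J hJ
            obtain ⟨c, hcK, h1, h2⟩ := K.2.1.2 a (hIK haI) b (hJK hbJ)
            exact ⟨c, Set.mem_biUnion hK hcK,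
              (sOrd_iff_le hscott _ _).mp h1, (sOrd_iff_le hscott _ _).mp h2⟩
          · intro a b hba ha
            simp only [Set.mem_iUnion] at ha ⊢
            obtain ⟨I, hI, haI⟩ := ha
            exact ⟨I, hI, I.2.2.1 a haI b ((sOrd_iff_le hscott _ _).mpr hba)⟩
        have hAsub : A.1 ⊆ ⋃ I ∈ D, (I : TopIdeal P).1 := by
          have : A ≤ ⟨_, hUU⟩ := hlub.2 fun I hI => Set.subset_biUnion_of_mem hI
          exact this
        obtain ⟨I, hI, hxI⟩ := Set.mem_iUnion₂.mp (hAsub hxA)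
        have hI𝒰 : I ∈ 𝒰 := by
          refine (h I).mpr ⟨B, ⟨x, hx⟩, hB𝒰, ?_⟩
          rw [hx]
          intro z hz
          exact I.2.2.1 x hxI z hz
        exact ⟨I, hI, hI𝒰⟩
    · intro h A
      constructor
      · intro hA
        set D : Set (TopIdeal P) := {I | ∃ x ∈ A.1, I.1 = dnSet x} with hD
        have hne : D.Nonempty := by
          obtain ⟨a, ha⟩ := A.2.1.1
          exact ⟨⟨dnSet a, principal_isTopIdeal a⟩, a, ha, rfl⟩
        have hdir : DirectedOn (· ≤ ·) D := by
          rintro I ⟨x, hxA, hIx⟩ J ⟨y, hyA, hJy⟩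
          obtain ⟨c, hcA, h1, h2⟩ := A.2.1.2 x hxA y hyA
          refine ⟨⟨dnSet c, principal_isTopIdeal c⟩, ⟨c, hcA, rfl⟩, ?_, ?_⟩
          · show I.1 ⊆ dnSet c
            rw [hIx]; intro z hz; exact sOrd_trans hz h1
          · show J.1 ⊆ dnSet c
            rw [hJy]; intro z hz; exact sOrd_trans hz h2
        have hlub : IsLUB D A := by
          constructor
          · rintro I ⟨x, hxA, hIx⟩
            show I.1 ⊆ A.1
            rw [hIx]
            intro z hz
            exact A.2.2.1 x hxA z hz
          · intro B hB
            show A.1 ⊆ B.1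
            intro a ha
            exact hB (show (⟨dnSet a, principal_isTopIdeal a⟩ : TopIdeal P) ∈ D from ⟨a, ha, rfl⟩) (sOrd_refl a)
        obtain ⟨I, ⟨x, hxA, hIx⟩, hI𝒰⟩ := h.2 D hne hdir A hlub hA
        refine ⟨I, ⟨x, hIx⟩, hI𝒰, ?_⟩
        rw [hIx]
        intro z hz
        exact A.2.2.1 x hxA z hz
      · rintro ⟨B, _, hB𝒰, hsub⟩
        exact h.1 B A hB𝒰 hsub
end

section
/- Let X and Y be algebraic spaces and let f : X → Y be a continuous map. Then f is way-below preserving (i.e., x ≪ y in X implies f(x) ≪ f(y) in Y) if and only if f(K(X)) ⊆ K(Y). -/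
open Set

section WayBelow

variable {X : Type*} [TopologicalSpace X]

theorem sOrd_iff_specializes {x y : X} : SOrd x y ↔ y ⤳ x :=
  specializes_iff_mem_closure.symm

theorem SOrd.map {Y : Type*} [TopologicalSpace Y] {f : X → Y} (hf : Continuous f) {x y : X}
    (h : SOrd x y) : SOrd (f x) (f y) :=
  sOrd_iff_specializes.mpr ((sOrd_iff_specializes.mp h).map hf)

theorem ConvTo.of_sOrd {D : Set X} {y z : X} (hD : ConvTo D z) (hyz : SOrd y z) :
    ConvTo D y :=
  fun U hU hyU => hD U hU ((sOrd_iff_specializes.mp hyz).mem_open hU hyU)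

theorem WayBelow.trans_sOrd {x y z : X} (hxy : WayBelow x y) (hyz : SOrd y z) :
    WayBelow x z :=
  fun D hD hDz => hxy D hD (hDz.of_sOrd hyz)

theorem SOrd.trans_wayBelow {x y z : X} (hxy : SOrd x y) (hyz : WayBelow y z) :
    WayBelow x z := fun D hD hDz =>
  let ⟨d, hdD, hyd⟩ := hyz D hD hDz
  ⟨d, hdD, sOrd_trans hxy hyd⟩

theorem IsAlgebraicSpace.exists_mem_kSet_of_wayBelow (hX : IsAlgebraicSpace X) {x y : X}
    (hxy : WayBelow x y) : ∃ k ∈ KSet X, SOrd x k ∧ SOrd k y := by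
  obtain ⟨k, ⟨hky, hk⟩, hxk⟩ := hxy _ (hX.2 y).1 (hX.2 y).2
  exact ⟨k, hk, hxk, hky⟩

end WayBelow

theorem wayBelow_preserving_iff_maps_compacts_general {X Y : Type*}
    [TopologicalSpace X] [TopologicalSpace Y]
    (hX : IsAlgebraicSpace X)
    (f : X → Y) (hf : Continuous f) :
    (∀ x y : X, WayBelow x y → WayBelow (f x) (f y)) ↔ f '' KSet X ⊆ KSet Y := by
  refine ⟨?_, fun hK x y hxy => ?_⟩
  · rintro hwb _ ⟨k, hk, rfl⟩
    exact hwb k k hk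
  · obtain ⟨k, hk, hxk, hky⟩ := hX.exists_mem_kSet_of_wayBelow hxy
    have hfk : WayBelow (f k) (f k) := hK ⟨k, hk, rfl⟩
    exact (hxk.map hf).trans_wayBelow (hfk.trans_sOrd (hky.map hf))

/-- a continuous map between algebraic spaces is way-below preserving
iff it maps compact elements to compact elements. -/
theorem wayBelow_preserving_iff_maps_compacts {X Y : Type*}
    [TopologicalSpace X] [TopologicalSpace Y]
    (hX : IsAlgebraicSpace X) (hY : IsAlgebraicSpace Y)
    (f : X → Y) (hf : Continuous f) :
    (∀ x y : X, WayBelow x y → WayBelow (f x) (f y)) ↔ f '' KSet X ⊆ KSet Y :=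
  wayBelow_preserving_iff_maps_compacts_general hX f hf
end

section
/- Let X be a continuous space, with specialization order ⊑ and d-approximation relation ≪. Then (X, ⊑, ≪) is a normal abstract basis; that is: (a) ≪ is transitive; (b) for every finite subset M ⊆ X and every z ∈ X with m ≪ z for all m ∈ M, there exists y ∈ X with m ≪ y for all m ∈ M and y ≪ z; (c) x ≪ y implies x ⊑ y; (d) a ⊑ b ≪ c ⊑ d implies a ≪ d; (e) if a ⋢ b then there exists c with c ≪ a and not c ≪ b. -/
open Set

/-- A normal abstract basis, given by explicit relations `le` and `prec`. -/
structure IsNormalAbstractBasis {A : Type*} (le : A → A → Prop) (prec : A → A → Prop) :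
    Prop where
  prec_trans : ∀ a b c : A, prec a b → prec b c → prec a c
  interpolation : ∀ (M : Finset A) (z : A), (∀ m ∈ M, prec m z) →
    ∃ y : A, (∀ m ∈ M, prec m y) ∧ prec y z
  prec_le : ∀ a b : A, prec a b → le a b
  le_prec_le : ∀ a b c d : A, le a b → prec b c → le c d → prec a d
  sep : ∀ a b : A, ¬ le a b → ∃ c : A, prec c a ∧ ¬ prec c b

section MyAux

variable {X : Type*} [TopologicalSpace X]

lemma aux_dnSet_dir (y : X) : IsDirSub (dnSet y) :=
  ⟨⟨y, sOrd_refl y⟩, fun a ha b hb => ⟨y, sOrd_refl y, ha, hb⟩⟩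

lemma aux_dnSet_conv (y : X) : ConvTo (dnSet y) y :=
  fun _U _ hU => ⟨y, sOrd_refl y, hU⟩

lemma aux_prec_le {a b : X} (h : WayBelow a b) : SOrd a b := by
  obtain ⟨d, hd, had⟩ := h (dnSet b) (aux_dnSet_dir b) (aux_dnSet_conv b)
  exact sOrd_trans had hd

lemma aux_conv_mono {D : Set X} {c d : X} (hcd : SOrd c d) (h : ConvTo D d) :
    ConvTo D c := by
  intro U hU hcU
  obtain ⟨w, hwU, hw⟩ := mem_closure_iff.mp hcd U hU hcU
  exact h U hU (hw ▸ hwU)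

lemma aux_le_prec_le {a b c d : X} (hab : SOrd a b) (hbc : WayBelow b c)
    (hcd : SOrd c d) : WayBelow a d := by
  intro D hD hconv
  obtain ⟨e, he, hbe⟩ := hbc D hD (aux_conv_mono hcd hconv)
  exact ⟨e, he, sOrd_trans hab hbe⟩

lemma aux_bound {A : Set X} (hA : IsDirSub A) :
    ∀ M : Finset X, (∀ m ∈ M, ∃ d ∈ A, SOrd m d) → ∃ d ∈ A, ∀ m ∈ M, SOrd m d := by
  classical
  intro M
  induction M using Finset.induction_on with
  | empty => intro _; obtain ⟨a, ha⟩ := hA.1; exact ⟨a, ha, by simp⟩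
  | @insert a s hx ih =>
    intro h
    obtain ⟨d1, hd1A, hd1⟩ := ih (fun m hm => h m (Finset.mem_insert_of_mem hm))
    obtain ⟨d2, hd2A, hd2⟩ := h a (Finset.mem_insert_self a s)
    obtain ⟨c, hcA, h1c, h2c⟩ := hA.2 d1 hd1A d2 hd2A
    refine ⟨c, hcA, fun m hm => ?_⟩
    rcases Finset.mem_insert.mp hm with rfl | hm
    · exact sOrd_trans hd2 h2c
    · exact sOrd_trans (hd1 m hm) h1c

end MyAux

/-- a continuous space with its specialization order and
d-approximation relation is a normal abstract basis. -/
theorem continuous_space_isNormalAbstractBasis {X : Type*} [TopologicalSpace X]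
    [T0Space X] (hX : IsContinuousSpace X) :
    IsNormalAbstractBasis (fun x y : X => SOrd x y) (fun x y : X => WayBelow x y) := by
  obtain ⟨_hdir, hcont⟩ := hX
  have interp_set : ∀ z : X,
      IsDirSub {a : X | ∃ y, WayBelow a y ∧ WayBelow y z} ∧
      ConvTo {a : X | ∃ y, WayBelow a y ∧ WayBelow y z} z := by
    intro z
    obtain ⟨D, hDsub, hDdir, hDconv⟩ := hcont z
    have hconv : ConvTo {a : X | ∃ y, WayBelow a y ∧ WayBelow y z} z := by
      intro U hU hzU
      obtain ⟨d, hdD, hdU⟩ := hDconv U hU hzU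
      obtain ⟨E, hEsub, hEdir, hEconv⟩ := hcont d
      obtain ⟨e, heE, heU⟩ := hEconv U hU hdU
      exact ⟨e, ⟨d, hEsub heE, hDsub hdD⟩, heU⟩
    refine ⟨⟨?_, ?_⟩, hconv⟩
    · obtain ⟨a, ha, _⟩ := hconv univ isOpen_univ trivial
      exact ⟨a, ha⟩
    · rintro a ⟨y1, hay1, hy1z⟩ b ⟨y2, hby2, hy2z⟩
      obtain ⟨d1, hd1D, h1⟩ := hy1z D hDdir hDconv
      obtain ⟨d2, hd2D, h2⟩ := hy2z D hDdir hDconv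
      obtain ⟨d, hdD, hd1, hd2⟩ := hDdir.2 d1 hd1D d2 hd2D
      have had : WayBelow a d :=
        aux_le_prec_le (sOrd_refl a) hay1 (sOrd_trans h1 hd1)
      have hbd : WayBelow b d :=
        aux_le_prec_le (sOrd_refl b) hby2 (sOrd_trans h2 hd2)
      obtain ⟨E, hEsub, hEdir, hEconv⟩ := hcont d
      obtain ⟨e1, he1E, hae1⟩ := had E hEdir hEconv
      obtain ⟨e2, he2E, hbe2⟩ := hbd E hEdir hEconv
      obtain ⟨e, heE, he1, he2⟩ := hEdir.2 e1 he1E e2 he2E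
      exact ⟨e, ⟨d, hEsub heE, hDsub hdD⟩, sOrd_trans hae1 he1, sOrd_trans hbe2 he2⟩
  refine ⟨?_, ?_, ?_, ?_, ?_⟩
  · exact fun a b c hab hbc => aux_le_prec_le (aux_prec_le hab) hbc (sOrd_refl c)
  · intro M z hM
    obtain ⟨hdirA, hconvA⟩ := interp_set z
    obtain ⟨d, ⟨y, hdy, hyz⟩, hd⟩ :=
      aux_bound hdirA M (fun m hm => (hM m hm) _ hdirA hconvA)
    exact ⟨y, fun m hm => aux_le_prec_le (hd m hm) hdy (sOrd_refl y), hyz⟩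
  · exact fun a b h => aux_prec_le h
  · exact fun a b c d hab hbc hcd => aux_le_prec_le hab hbc hcd
  · intro a b hab
    obtain ⟨D, hDsub, hDdir, hDconv⟩ := hcont a
    obtain ⟨c, hcD, hcU⟩ := hDconv _ isClosed_closure.isOpen_compl hab
    exact ⟨c, hDsub hcD, fun h => hcU (aux_prec_le h)⟩
end

section
/- Let (A, ≤, ≺) be a normal abstract basis and for a ∈ A set ↟a = {b ∈ A : a ≺ b}. Then {↟a : a ∈ A} is a base for a topology τ on A, and (A, τ) is a continuous space whose specialization order equals ≤ and whose d-approximation relation ≪ equals ≺. -/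
open Set

/-- A normal abstract basis on a poset. -/
structure NormalAbstractBasis (A : Type*) [PartialOrder A] (prec : A → A → Prop) :
    Prop where
  prec_trans : ∀ a b c : A, prec a b → prec b c → prec a c
  interpolation : ∀ (M : Finset A) (z : A), (∀ m ∈ M, prec m z) →
    ∃ y : A, (∀ m ∈ M, prec m y) ∧ prec y z
  prec_le : ∀ a b : A, prec a b → a ≤ b
  le_prec_le : ∀ a b c d : A, a ≤ b → prec b c → c ≤ d → prec a d
  sep : ∀ a b : A, ¬ a ≤ b → ∃ c : A, prec c a ∧ ¬ prec c b

/-- the sets `↟a = {b | a ≺ b}` form a base of a topology making a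
normal abstract basis a continuous space whose specialization order is `≤` and whose
d-approximation relation is `≺`. -/
theorem normal_abstract_basis_gives_continuous_space {A : Type*} [PartialOrder A]
    (prec : A → A → Prop) (h : NormalAbstractBasis A prec) :
    letI t : TopologicalSpace A :=
      TopologicalSpace.generateFrom {S : Set A | ∃ a : A, S = {b : A | prec a b}}
    TopologicalSpace.IsTopologicalBasis {S : Set A | ∃ a : A, S = {b : A | prec a b}} ∧
      IsContinuousSpace A ∧
      (∀ a b : A, SOrd a b ↔ a ≤ b) ∧
      (∀ a b : A, WayBelow a b ↔ prec a b) := by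
  letI t : TopologicalSpace A :=
    TopologicalSpace.generateFrom {S : Set A | ∃ a : A, S = {b : A | prec a b}}
  haveI := Classical.decEq A
  -- basic facts
  have hbasis : TopologicalSpace.IsTopologicalBasis
      {S : Set A | ∃ a : A, S = {b : A | prec a b}} := by
    refine ⟨?_, ?_, rfl⟩
    · rintro t₁ ⟨a₁, rfl⟩ t₂ ⟨a₂, rfl⟩ x ⟨h1, h2⟩
      obtain ⟨y, hy, hyx⟩ := h.interpolation {a₁, a₂} x (by
        intro m hm
        rcases Finset.mem_insert.mp hm with rfl | hm
        · exact h1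
        · rcases Finset.mem_singleton.mp hm with rfl
          exact h2)
      refine ⟨{b | prec y b}, ⟨y, rfl⟩, hyx, ?_⟩
      rintro z hz
      exact ⟨h.prec_trans _ _ _ (hy a₁ (by simp)) hz,
        h.prec_trans _ _ _ (hy a₂ (by simp)) hz⟩
    · apply Set.eq_univ_of_forall
      intro x
      obtain ⟨y, -, hy⟩ := h.interpolation ∅ x (by simp)
      exact ⟨{b | prec y b}, ⟨y, rfl⟩, hy⟩
  have hopen : ∀ a : A, IsOpen {b : A | prec a b} := fun a =>
    hbasis.isOpen ⟨a, rfl⟩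
  -- specialization order = ≤
  have hso : ∀ a b : A, SOrd a b ↔ a ≤ b := by
    intro a b
    rw [SOrd, hbasis.mem_closure_iff]
    constructor
    · intro hc
      by_contra hab
      obtain ⟨c, hca, hcb⟩ := h.sep a b hab
      obtain ⟨z, hz, rfl⟩ := hc {w | prec c w} ⟨c, rfl⟩ hca
      exact hcb hz
    · rintro hab o ⟨c, rfl⟩ hca
      exact ⟨b, h.le_prec_le c c a b le_rfl hca hab, rfl⟩
  -- open sets are upper sets
  have hupper : ∀ U : Set A, IsOpen U → ∀ x ∈ U, ∀ y : A, x ≤ y → y ∈ U := by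
    intro U hU x hx y hxy
    obtain ⟨v, ⟨a, rfl⟩, hxv, hvU⟩ := hbasis.exists_subset_of_mem_open hx hU
    exact hvU (h.le_prec_le a a x y le_rfl hxv hxy)
  -- the canonical directed set below x
  have hDdir : ∀ x : A, IsDirSub {z : A | prec z x} := by
    intro x
    constructor
    · obtain ⟨y, -, hy⟩ := h.interpolation ∅ x (by simp)
      exact ⟨y, hy⟩
    · intro a ha b hb
      obtain ⟨y, hy, hyx⟩ := h.interpolation {a, b} x (by
        intro m hm
        rcases Finset.mem_insert.mp hm with rfl | hm
        · exact ha
        · rcases Finset.mem_singleton.mp hm with rfl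
          exact hb)
      exact ⟨y, hyx, (hso a y).mpr (h.prec_le _ _ (hy a (by simp))),
        (hso b y).mpr (h.prec_le _ _ (hy b (by simp)))⟩
  have hDconv : ∀ x : A, ConvTo {z : A | prec z x} x := by
    intro x U hU hxU
    obtain ⟨v, ⟨a, rfl⟩, hxv, hvU⟩ := hbasis.exists_subset_of_mem_open hxU hU
    obtain ⟨y, hy, hyx⟩ := h.interpolation {a} x (by simpa using hxv)
    exact ⟨y, hyx, hvU (hy a (by simp))⟩
  -- way below = prec
  have hwb : ∀ a b : A, WayBelow a b ↔ prec a b := by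
    intro a b
    constructor
    · intro hab
      obtain ⟨d, hd, had⟩ := hab {z | prec z b} (hDdir b) (hDconv b)
      exact h.le_prec_le a d b b ((hso a d).mp had) hd le_rfl
    · intro hab D hD hDb
      obtain ⟨d, hdD, hd⟩ := hDb {z | prec a z} (hopen a) hab
      exact ⟨d, hdD, (hso a d).mpr (h.prec_le _ _ hd)⟩
  refine ⟨hbasis, ⟨⟨?_, ?_⟩, ?_⟩, hso, hwb⟩
  · -- T0
    refine ⟨fun {x y} hxy => ?_⟩
    have h1 : x ≤ y := (hso x y).mp (by
      rw [SOrd, hxy.mem_closed_iff isClosed_closure]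
      exact subset_closure rfl)
    have h2 : y ≤ x := (hso y x).mp (by
      rw [SOrd, ← hxy.mem_closed_iff isClosed_closure]
      exact subset_closure rfl)
    exact le_antisymm h1 h2
  · -- directed-open implies open
    intro U hU
    refine hbasis.isOpen_iff.mpr fun x hx => ?_
    obtain ⟨d, hd, hdU⟩ := hU {z | prec z x} x (hDdir x) (hDconv x) hx
    refine ⟨{b | prec d b}, ⟨d, rfl⟩, hd, fun z hz => ?_⟩
    have hconv : ConvTo ({z} : Set A) d := fun V hV hdV =>
      ⟨z, rfl, hupper V hV d hdV z (h.prec_le _ _ hz)⟩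
    obtain ⟨w, hw, hwU⟩ := hU {z} d ⟨⟨z, rfl⟩, by
      intro p hp q hq
      exact ⟨z, rfl, by rw [show p = z from hp]; exact sOrd_refl z,
        by rw [show q = z from hq]; exact sOrd_refl z⟩⟩ hconv hdU
    rwa [show w = z from hw] at hwU
  · -- continuity
    intro x
    refine ⟨{z | prec z x}, fun z hz => (hwb z x).mpr hz, hDdir x, hDconv x⟩
end
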